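/- arXiv:1912.09227 — 4 statements merged into one kernel-verified Lean document; each statement's English description precedes it below -/
import Mathlib

section
/- Let μ be a Borel probability measure on M and let x be a φ-barycenter of μ. Then ∫_M dist(z,x)² dμ(z) ≤ 4β²·η(μ). (This is Lemma 'localized-near-barycenter' with the uniform constant made explicit: localized states are concentrated near their φ-barycenters, with squared 2-Wasserstein distance to the Dirac measure at the barycenter bounded by a uniform multiple of the dispersion.) -/
open MeasureTheory

/-- Localized states are concentrated near their φ-barycenters: the squared
2-Wasserstein distance to the Dirac measure at a φ-barycenter is bounded by
`4 β² η(μ)`, where `η(μ) = ∫ ‖φ z − b(μ)‖² dμ` is the dispersion and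
`b(μ) = ∫ φ dμ` the mean. -/
theorem localized_near_barycenter
    {M : Type*} [MetricSpace M] [CompactSpace M] [MeasurableSpace M] [BorelSpace M]
    (μ : Measure M) [IsProbabilityMeasure μ]
    (n : ℕ) (hn : 1 ≤ n) (φ : M → EuclideanSpace ℝ (Fin n)) (hφ : Continuous φ)
    (β : ℝ) (hβ : 0 < β)
    (hco : ∀ x y : M, dist x y ≤ β * ‖φ x - φ y‖)
    (x : M) (hx : ∀ z : M, ‖φ x - ∫ w, φ w ∂μ‖ ≤ ‖φ z - ∫ w, φ w ∂μ‖) :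
    ∫ z, dist z x ^ 2 ∂μ ≤ 4 * β ^ 2 * ∫ z, ‖φ z - ∫ w, φ w ∂μ‖ ^ 2 ∂μ := by
  set b : EuclideanSpace ℝ (Fin n) := ∫ w, φ w ∂μ with hb
  have key : ∀ z : M, dist z x ^ 2 ≤ 4 * β ^ 2 * ‖φ z - b‖ ^ 2 := by
    intro z
    have h1 : dist z x ≤ β * ‖φ z - φ x‖ := hco z x
    have h2 : ‖φ z - φ x‖ ≤ ‖φ z - b‖ + ‖φ x - b‖ := by
      have := norm_sub_le (φ z - b) (φ x - b)
      simpa [sub_sub_sub_cancel_right] using this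
    have h3 : ‖φ z - φ x‖ ≤ 2 * ‖φ z - b‖ := by
      have := hx z
      nlinarith
    have h4 : dist z x ≤ 2 * β * ‖φ z - b‖ := by
      calc dist z x ≤ β * ‖φ z - φ x‖ := h1
        _ ≤ β * (2 * ‖φ z - b‖) := by nlinarith [norm_nonneg (φ z - φ x)]
        _ = 2 * β * ‖φ z - b‖ := by ring
    nlinarith [dist_nonneg (x := z) (y := x), norm_nonneg (φ z - b)]
  have hcont : Continuous fun z : M => ‖φ z - b‖ ^ 2 :=
    ((hφ.sub continuous_const).norm.pow 2)
  have hint1 : Integrable (fun z : M => dist z x ^ 2) μ :=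
    ((continuous_id.dist continuous_const).pow 2).integrable_of_hasCompactSupport
      (isCompact_univ.of_isClosed_subset (isClosed_tsupport _) (Set.subset_univ _))
  have hint2 : Integrable (fun z : M => 4 * β ^ 2 * ‖φ z - b‖ ^ 2) μ :=
    (continuous_const.mul hcont).integrable_of_hasCompactSupport
      (isCompact_univ.of_isClosed_subset (isClosed_tsupport _) (Set.subset_univ _))
  calc ∫ z, dist z x ^ 2 ∂μ ≤ ∫ z, 4 * β ^ 2 * ‖φ z - b‖ ^ 2 ∂μ :=
        integral_mono hint1 hint2 key
    _ = 4 * β ^ 2 * ∫ z, ‖φ z - b‖ ^ 2 ∂μ := integral_const_mul _ _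
end

section
/- Let μ be a Borel probability measure on M. Then any two φ-barycenters x and y of μ satisfy dist(x,y) ≤ 2β·√(η(μ)). -/
open MeasureTheory

/-- Any two φ-barycenters of a probability measure `μ` are within distance
`2 β √η(μ)` of each other. -/
theorem barycenters_close
    {M : Type*} [MetricSpace M] [CompactSpace M] [MeasurableSpace M] [BorelSpace M]
    (μ : Measure M) [IsProbabilityMeasure μ]
    (n : ℕ) (hn : 1 ≤ n) (φ : M → EuclideanSpace ℝ (Fin n)) (hφ : Continuous φ)
    (β : ℝ) (hβ : 0 < β)
    (hco : ∀ x y : M, dist x y ≤ β * ‖φ x - φ y‖)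
    (x y : M)
    (hx : ∀ z : M, ‖φ x - ∫ w, φ w ∂μ‖ ≤ ‖φ z - ∫ w, φ w ∂μ‖)
    (hy : ∀ z : M, ‖φ y - ∫ w, φ w ∂μ‖ ≤ ‖φ z - ∫ w, φ w ∂μ‖) :
    dist x y ≤ 2 * β * Real.sqrt (∫ z, ‖φ z - ∫ w, φ w ∂μ‖ ^ 2 ∂μ) := by
  set b := ∫ w, φ w ∂μ with hb
  set η := ∫ z, ‖φ z - b‖ ^ 2 ∂μ with hη
  have hcont : Continuous fun z => ‖φ z - b‖ ^ 2 := by fun_prop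
  have hint : Integrable (fun z => ‖φ z - b‖ ^ 2) μ :=
    by
    have : HasCompactSupport fun z => ‖φ z - b‖ ^ 2 := HasCompactSupport.of_compactSpace _
    exact hcont.integrable_of_hasCompactSupport this
  have hη0 : 0 ≤ η := integral_nonneg fun z => sq_nonneg _
  have key : ∀ p : M, (∀ z : M, ‖φ p - b‖ ≤ ‖φ z - b‖) → ‖φ p - b‖ ≤ Real.sqrt η := by
    intro p hp
    have h1 : ‖φ p - b‖ ^ 2 ≤ η := by
      calc ‖φ p - b‖ ^ 2 = ∫ _, ‖φ p - b‖ ^ 2 ∂μ := by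
            simp [integral_const]
        _ ≤ η := integral_mono (integrable_const _) hint fun z =>
            pow_le_pow_left₀ (norm_nonneg _) (hp z) 2
    have := Real.sqrt_le_sqrt h1
    rwa [Real.sqrt_sq (norm_nonneg _)] at this
  calc dist x y ≤ β * ‖φ x - φ y‖ := hco x y
    _ ≤ β * (‖φ x - b‖ + ‖φ y - b‖) := by
        gcongr
        have := norm_sub_le_norm_sub_add_norm_sub (φ x) b (φ y)
        rwa [norm_sub_rev b (φ y)] at this
    _ ≤ β * (Real.sqrt η + Real.sqrt η) := by
        gcongr
        · exact key x hx
        · exact key y hy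
    _ = 2 * β * Real.sqrt η := by ring
end

section
/- Let μ and ν be Borel probability measures on M with φ-barycenters x and y respectively. Then for every 1-Lipschitz function f : M → ℝ one has |∫ f dμ − ∫ f dν| ≤ dist(x,y) + 2β·(√(η(μ)) + √(η(ν))). (This is the upper-bound half of Proposition 'statesarepoints', expressing the Kantorovich–Rubinstein distance in its dual form over 1-Lipschitz functions.) -/
open MeasureTheory

private lemma integral_le_sqrt_integral_sq {α : Type*} [MeasurableSpace α]
    (μ : Measure α) [IsProbabilityMeasure μ] {g : α → ℝ} (hg0 : ∀ z, 0 ≤ g z)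
    (hg : Integrable g μ) (hg2 : Integrable (fun z => g z ^ 2) μ) :
    ∫ z, g z ∂μ ≤ Real.sqrt (∫ z, g z ^ 2 ∂μ) := by
  set c := ∫ z, g z ∂μ with hc
  have hc0 : 0 ≤ c := integral_nonneg hg0
  have hsq0 : 0 ≤ ∫ z, g z ^ 2 ∂μ := integral_nonneg fun z => sq_nonneg _
  refine (Real.le_sqrt hc0 hsq0).2 ?_
  have hexp : ∫ z, (g z - c) ^ 2 ∂μ = (∫ z, g z ^ 2 ∂μ) - c ^ 2 := by
    have h1 : ∀ z, (g z - c) ^ 2 = g z ^ 2 - (2 * c) * g z + c ^ 2 := by intro z; ring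
    simp_rw [h1]
    have hI1 : Integrable (fun z => g z ^ 2 - 2 * c * g z) μ := hg2.sub (hg.const_mul (2 * c))
    have hI2 : Integrable (fun z => 2 * c * g z) μ := hg.const_mul (2 * c)
    rw [integral_add hI1 (integrable_const _), integral_sub hg2 hI2, integral_const_mul,
      integral_const]
    simp [← hc]
    ring
  have hpos : 0 ≤ ∫ z, (g z - c) ^ 2 ∂μ := integral_nonneg fun z => sq_nonneg _
  linarith [hexp ▸ hpos]

/-- Upper-bound half of Proposition `statesarepoints`: for all 1-Lipschitz `f`, the
difference of integrals against two measures is bounded by the distance between their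
φ-barycenters plus `2β(√η(μ) + √η(ν))`. -/
theorem states_are_points_upper
    {M : Type*} [MetricSpace M] [CompactSpace M] [MeasurableSpace M] [BorelSpace M]
    (μ ν : Measure M) [IsProbabilityMeasure μ] [IsProbabilityMeasure ν]
    (n : ℕ) (hn : 1 ≤ n) (φ : M → EuclideanSpace ℝ (Fin n)) (hφ : Continuous φ)
    (β : ℝ) (hβ : 0 < β)
    (hco : ∀ x y : M, dist x y ≤ β * ‖φ x - φ y‖)
    (x y : M)
    (hx : ∀ z : M, ‖φ x - ∫ w, φ w ∂μ‖ ≤ ‖φ z - ∫ w, φ w ∂μ‖)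
    (hy : ∀ z : M, ‖φ y - ∫ w, φ w ∂ν‖ ≤ ‖φ z - ∫ w, φ w ∂ν‖) :
    ∀ f : M → ℝ, LipschitzWith 1 f →
      |(∫ z, f z ∂μ) - ∫ z, f z ∂ν| ≤
        dist x y + 2 * β * (Real.sqrt (∫ z, ‖φ z - ∫ w, φ w ∂μ‖ ^ 2 ∂μ)
          + Real.sqrt (∫ z, ‖φ z - ∫ w, φ w ∂ν‖ ^ 2 ∂ν)) := by
  intro f hf
  -- integrability of continuous functions on a compact metric space
  have hint : ∀ (ρ : Measure M) [IsProbabilityMeasure ρ], ∀ g : M → ℝ, Continuous g →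
      Integrable g ρ := by
    intro ρ _ g hg
    rw [← integrableOn_univ]; exact hg.continuousOn.integrableOn_compact isCompact_univ
  -- the key estimate for one measure and its barycenter
  have key : ∀ (ρ : Measure M) [IsProbabilityMeasure ρ], ∀ p : M,
      (∀ z : M, ‖φ p - ∫ w, φ w ∂ρ‖ ≤ ‖φ z - ∫ w, φ w ∂ρ‖) →
      |(∫ z, f z ∂ρ) - f p| ≤ 2 * β * Real.sqrt (∫ z, ‖φ z - ∫ w, φ w ∂ρ‖ ^ 2 ∂ρ) := by
    intro ρ _ p hp
    set b := ∫ w, φ w ∂ρ with hb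
    set g : M → ℝ := fun z => ‖φ z - b‖ with hg
    have hgc : Continuous g := (hφ.sub continuous_const).norm
    have hgint : Integrable g ρ := hint ρ g hgc
    have hg2int : Integrable (fun z => g z ^ 2) ρ := hint ρ _ (hgc.pow 2)
    have hfc : Continuous f := hf.continuous
    have hfint : Integrable f ρ := hint ρ f hfc
    have step1 : |(∫ z, f z ∂ρ) - f p| ≤ ∫ z, 2 * β * g z ∂ρ := by
      have h1 : (∫ z, f z ∂ρ) - f p = ∫ z, (f z - f p) ∂ρ := by
        rw [integral_sub hfint (integrable_const _), integral_const]
        simp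
      rw [h1]
      calc |∫ z, (f z - f p) ∂ρ| ≤ ∫ z, |f z - f p| ∂ρ := by
            simpa [Real.norm_eq_abs] using
              norm_integral_le_integral_norm (μ := ρ) (f := fun z => f z - f p)
        _ ≤ ∫ z, 2 * β * g z ∂ρ := by
            refine integral_mono ((hfint.sub (integrable_const _)).abs)
              ((hgint.const_mul _)) ?_
            intro z
            have h2 : |f z - f p| ≤ dist z p := by
              have := hf.dist_le_mul z p
              simpa [Real.dist_eq] using this
            have h3 : dist z p ≤ β * ‖φ z - φ p‖ := hco z p
            have h4 : ‖φ z - φ p‖ ≤ ‖φ z - b‖ + ‖φ p - b‖ := by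
              have : φ z - φ p = (φ z - b) - (φ p - b) := by abel
              rw [this]; exact norm_sub_le _ _
            have h5 : ‖φ p - b‖ ≤ ‖φ z - b‖ := hp z
            calc |f z - f p| ≤ β * ‖φ z - φ p‖ := h2.trans h3
              _ ≤ β * (2 * g z) := by
                  refine mul_le_mul_of_nonneg_left ?_ hβ.le
                  simp only [hg]
                  linarith
              _ = 2 * β * g z := by ring
    have step2 : ∫ z, 2 * β * g z ∂ρ ≤ 2 * β * Real.sqrt (∫ z, g z ^ 2 ∂ρ) := by
      rw [integral_const_mul]
      refine mul_le_mul_of_nonneg_left ?_ (by positivity)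
      exact integral_le_sqrt_integral_sq ρ (fun z => norm_nonneg _) hgint hg2int
    exact step1.trans step2
  have kμ := key μ x hx
  have kν := key ν y hy
  have hxy : |f x - f y| ≤ dist x y := by
    have := hf.dist_le_mul x y
    simpa [Real.dist_eq] using this
  have htri : |(∫ z, f z ∂μ) - ∫ z, f z ∂ν| ≤
      |(∫ z, f z ∂μ) - f x| + |f x - f y| + |f y - ∫ z, f z ∂ν| := by
    calc |(∫ z, f z ∂μ) - ∫ z, f z ∂ν|
        = |((∫ z, f z ∂μ) - f x) + (f x - f y) + (f y - ∫ z, f z ∂ν)| := by ring_nf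
      _ ≤ _ := by
          refine (abs_add_le _ _).trans ?_
          gcongr
          exact abs_add_le _ _
  have kν' : |f y - ∫ z, f z ∂ν| ≤ 2 * β * Real.sqrt (∫ z, ‖φ z - ∫ w, φ w ∂ν‖ ^ 2 ∂ν) := by
    rwa [abs_sub_comm]
  calc |(∫ z, f z ∂μ) - ∫ z, f z ∂ν|
      ≤ |(∫ z, f z ∂μ) - f x| + |f x - f y| + |f y - ∫ z, f z ∂ν| := htri
    _ ≤ 2 * β * Real.sqrt (∫ z, ‖φ z - ∫ w, φ w ∂μ‖ ^ 2 ∂μ) + dist x y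
        + 2 * β * Real.sqrt (∫ z, ‖φ z - ∫ w, φ w ∂ν‖ ^ 2 ∂ν) := by
        gcongr
    _ = dist x y + 2 * β * (Real.sqrt (∫ z, ‖φ z - ∫ w, φ w ∂μ‖ ^ 2 ∂μ)
          + Real.sqrt (∫ z, ‖φ z - ∫ w, φ w ∂ν‖ ^ 2 ∂ν)) := by ring
end

section
/- Let μ and ν be Borel probability measures on M with φ-barycenters x and y respectively. Then there exists a 1-Lipschitz function f : M → ℝ (namely f(z) = dist(z,y)) such that ∫ f dμ − ∫ f dν ≥ dist(x,y) − 2β·(√(η(μ)) + √(η(ν))). (This is the lower-bound half of Proposition 'statesarepoints' in Kantorovich dual form.) -/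
/-!
If `x` minimises `‖φ · - b‖`, the co-Lipschitz bound and the triangle inequality in `ℝⁿ` give
`dist z x ≤ 2β ‖φ z - b‖` for every `z`. Integrating against `μ` (with `b` its mean) and applying
Cauchy–Schwarz bounds `∫ dist · x dμ` by `2β √η(μ)`, and likewise `∫ dist · y dν ≤ 2β √η(ν)`.
The triangle inequality `dist x y ≤ dist x z + dist z y` then turns these into the lower bound for
`f = dist · y`.
-/

open MeasureTheory ProbabilityTheory

lemma integral_le_sqrt_integral_sq_s4 {Ω : Type*} [MeasurableSpace Ω] (μ : Measure Ω)
    [IsProbabilityMeasure μ] {g : Ω → ℝ} (hg : MemLp g 2 μ) :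
    ∫ ω, g ω ∂μ ≤ √(∫ ω, g ω ^ 2 ∂μ) := by
  have hvar : (∫ ω, g ω ∂μ) ^ 2 ≤ ∫ ω, g ω ^ 2 ∂μ := by
    have h := variance_nonneg g μ
    rw [variance_eq_sub hg] at h
    simpa [Pi.pow_apply] using h
  calc ∫ ω, g ω ∂μ ≤ |∫ ω, g ω ∂μ| := le_abs_self _
    _ = √((∫ ω, g ω ∂μ) ^ 2) := (Real.sqrt_sq_eq_abs _).symm
    _ ≤ √(∫ ω, g ω ^ 2 ∂μ) := Real.sqrt_le_sqrt hvar

lemma dist_le_two_mul_norm_sub_of_forall_norm_sub_le {M E : Type*} [PseudoMetricSpace M]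
    [SeminormedAddCommGroup E] {φ : M → E} {β : ℝ} (hβ : 0 ≤ β)
    (hco : ∀ x y : M, dist x y ≤ β * ‖φ x - φ y‖) {b : E} {x : M}
    (hx : ∀ z : M, ‖φ x - b‖ ≤ ‖φ z - b‖) (z : M) :
    dist z x ≤ 2 * β * ‖φ z - b‖ :=
  calc dist z x ≤ β * ‖φ z - φ x‖ := hco z x
    _ ≤ β * (‖φ z - b‖ + ‖φ x - b‖) := by
      gcongr
      simpa only [norm_sub_rev b] using norm_sub_le_norm_sub_add_norm_sub (φ z) b (φ x)
    _ ≤ β * (‖φ z - b‖ + ‖φ z - b‖) := by gcongr; exact hx z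
    _ = 2 * β * ‖φ z - b‖ := by ring

section CompactSpace

variable {M : Type*} [PseudoMetricSpace M] [CompactSpace M] [MeasurableSpace M]
  [OpensMeasurableSpace M] (μ : Measure M) [IsProbabilityMeasure μ]

lemma integral_dist_le_of_forall_norm_sub_le {E : Type*} [NormedAddCommGroup E] {φ : M → E}
    (hφ : Continuous φ) {β : ℝ} (hβ : 0 ≤ β) (hco : ∀ x y : M, dist x y ≤ β * ‖φ x - φ y‖)
    {b : E} {x : M} (hx : ∀ z : M, ‖φ x - b‖ ≤ ‖φ z - b‖) :
    ∫ z, dist z x ∂μ ≤ 2 * β * √(∫ z, ‖φ z - b‖ ^ 2 ∂μ) := by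
  have hdist : Continuous fun z => dist z x := continuous_id.dist continuous_const
  have hnorm : Continuous fun z => ‖φ z - b‖ := (hφ.sub continuous_const).norm
  calc ∫ z, dist z x ∂μ ≤ ∫ z, 2 * β * ‖φ z - b‖ ∂μ :=
        integral_mono (hdist.integrable_of_hasCompactSupport (.of_compactSpace _))
          ((hnorm.integrable_of_hasCompactSupport (.of_compactSpace _)).const_mul _)
          (dist_le_two_mul_norm_sub_of_forall_norm_sub_le hβ hco hx)
    _ = 2 * β * ∫ z, ‖φ z - b‖ ∂μ := integral_const_mul _ _
    _ ≤ 2 * β * √(∫ z, ‖φ z - b‖ ^ 2 ∂μ) := by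
      gcongr
      exact integral_le_sqrt_integral_sq_s4 μ
        (hnorm.memLp_of_hasCompactSupport (.of_compactSpace _))

lemma dist_sub_integral_dist_le_integral_dist (x y : M) :
    dist x y - ∫ z, dist z x ∂μ ≤ ∫ z, dist z y ∂μ := by
  have hint : ∀ w : M, Integrable (fun z => dist z w) μ := fun w =>
    (continuous_id.dist continuous_const).integrable_of_hasCompactSupport (.of_compactSpace _)
  calc dist x y - ∫ z, dist z x ∂μ = ∫ z, (dist x y - dist z x) ∂μ := by
        rw [integral_sub (integrable_const _) (hint x), integral_const, probReal_univ, one_smul]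
    _ ≤ ∫ z, dist z y ∂μ :=
        integral_mono ((integrable_const _).sub (hint x)) (hint y) fun z => by
          linarith [dist_triangle_left x y z]

end CompactSpace

theorem states_are_points_lower_general
    {M : Type*} [MetricSpace M] [CompactSpace M] [MeasurableSpace M] [BorelSpace M]
    (μ ν : Measure M) [IsProbabilityMeasure μ] [IsProbabilityMeasure ν]
    (n : ℕ) (φ : M → EuclideanSpace ℝ (Fin n)) (hφ : Continuous φ)
    (β : ℝ) (hβ : 0 < β)
    (hco : ∀ x y : M, dist x y ≤ β * ‖φ x - φ y‖)
    (x y : M)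
    (hx : ∀ z : M, ‖φ x - ∫ w, φ w ∂μ‖ ≤ ‖φ z - ∫ w, φ w ∂μ‖)
    (hy : ∀ z : M, ‖φ y - ∫ w, φ w ∂ν‖ ≤ ‖φ z - ∫ w, φ w ∂ν‖) :
    ∃ f : M → ℝ, f = (fun z => dist z y) ∧ LipschitzWith 1 f ∧
      dist x y - 2 * β * (Real.sqrt (∫ z, ‖φ z - ∫ w, φ w ∂μ‖ ^ 2 ∂μ)
          + Real.sqrt (∫ z, ‖φ z - ∫ w, φ w ∂ν‖ ^ 2 ∂ν)) ≤
        (∫ z, f z ∂μ) - ∫ z, f z ∂ν := by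
  refine ⟨fun z => dist z y, rfl, LipschitzWith.dist_left y, ?_⟩
  have hμ := integral_dist_le_of_forall_norm_sub_le μ hφ hβ.le hco hx
  have hν := integral_dist_le_of_forall_norm_sub_le ν hφ hβ.le hco hy
  have htri := dist_sub_integral_dist_le_integral_dist μ x y
  linarith

/-- Lower-bound half of Proposition `statesarepoints` in Kantorovich dual form:
the 1-Lipschitz function `f z = dist z y` witnesses
`∫ f dμ − ∫ f dν ≥ dist x y − 2β(√η(μ) + √η(ν))`. -/
theorem states_are_points_lower
    {M : Type*} [MetricSpace M] [CompactSpace M] [MeasurableSpace M] [BorelSpace M]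
    (μ ν : Measure M) [IsProbabilityMeasure μ] [IsProbabilityMeasure ν]
    (n : ℕ) (hn : 1 ≤ n) (φ : M → EuclideanSpace ℝ (Fin n)) (hφ : Continuous φ)
    (β : ℝ) (hβ : 0 < β)
    (hco : ∀ x y : M, dist x y ≤ β * ‖φ x - φ y‖)
    (x y : M)
    (hx : ∀ z : M, ‖φ x - ∫ w, φ w ∂μ‖ ≤ ‖φ z - ∫ w, φ w ∂μ‖)
    (hy : ∀ z : M, ‖φ y - ∫ w, φ w ∂ν‖ ≤ ‖φ z - ∫ w, φ w ∂ν‖) :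
    ∃ f : M → ℝ, f = (fun z => dist z y) ∧ LipschitzWith 1 f ∧
      dist x y - 2 * β * (Real.sqrt (∫ z, ‖φ z - ∫ w, φ w ∂μ‖ ^ 2 ∂μ)
          + Real.sqrt (∫ z, ‖φ z - ∫ w, φ w ∂ν‖ ^ 2 ∂ν)) ≤
        (∫ z, f z ∂μ) - ∫ z, f z ∂ν :=
  states_are_points_lower_general μ ν n φ hφ β hβ hco x y hx hy
end
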